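/- arXiv:1805.09586 — 6 statements merged into one kernel-verified Lean document; each statement's English description precedes it below -/
import Mathlib

section
/- Let d⁺ = ((d₁⁺,v₁),…,(dₙ⁺,vₙ)) be an outdegree-vertex sequence, let W be a proper subset of V = {v₁,…,vₙ}, and let G_W be an oriented graph on V in which every vertex of W has its prescribed outdegree and every vertex outside W has outdegree 0, such that d⁺ is G_W-normal. Suppose that for some index i the vertex vᵢ ∈ V \ W has dᵢ⁺ > 0. Then d⁺ has a realization G satisfying N⁺_G(v) = N⁺_{G_W}(v) for every v ∈ W if and only if d⁺ has a realization H satisfying both N⁺_H(v) = N⁺_{G_W}(v) for every v ∈ W and N⁺_H(vᵢ) = L_{G_W}(vᵢ), where L_{G_W}(vᵢ) is the leftmost possible out-neighbourhood of vᵢ. -/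
/-- An oriented graph on `Fin m`: no loops and at most one of the two possible
directed edges between any two vertices. -/
def IsOriented {m : ℕ} (R : Fin m → Fin m → Bool) : Prop :=
  ∀ i j, R i j = true → R j i = false

/-- The outdegree of vertex `i` in the directed graph `R`. -/
def outDeg {m : ℕ} (R : Fin m → Fin m → Bool) (i : Fin m) : ℕ :=
  (Finset.univ.filter (fun j => R i j = true)).card

/-- The indegree of vertex `i` in the directed graph `R`. -/
def inDeg {m : ℕ} (R : Fin m → Fin m → Bool) (i : Fin m) : ℕ :=
  (Finset.univ.filter (fun j => R j i = true)).card

/-- The set of out-neighbours of vertex `i` in the directed graph `R`. -/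
def outNbrs {m : ℕ} (R : Fin m → Fin m → Bool) (i : Fin m) : Finset (Fin m) :=
  Finset.univ.filter (fun j => R i j = true)
/-- `R` is a realization of the outdegree-vertex sequence `d`: an oriented graph
in which every vertex `i` has outdegree `d i`. -/
def IsRealization {m : ℕ} (d : Fin m → ℕ) (R : Fin m → Fin m → Bool) : Prop :=
  IsOriented R ∧ ∀ i, outDeg R i = d i

/-- The OVS `d` is `G_W`-normal: the first `|W|` entries of the sequence are exactly
the vertices of `W`, and past `W` the values `d i + d⁻_{G_W}(i)` are sorted, with ties
broken by `d i ≤ d (i+1)`. (Vertices are identified with their position in the sequence.) -/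
def IsGWNormal {m : ℕ} (d : Fin m → ℕ) (W : Finset (Fin m)) (GW : Fin m → Fin m → Bool) : Prop :=
  (∀ i : Fin m, (i : ℕ) < W.card → i ∈ W) ∧
  (∀ i j : Fin m, W.card ≤ (i : ℕ) → (i : ℕ) + 1 = (j : ℕ) →
    (d i + inDeg GW i < d j + inDeg GW j ∨
      (d i + inDeg GW i = d j + inDeg GW j ∧ d i ≤ d j)))

/-- `A` is a possible out-neighbourhood (PON) of `i`: a set of `d i` vertices avoiding
`i` itself and the in-neighbours of `i` in `G_W`. -/
def IsPON {m : ℕ} (d : Fin m → ℕ) (GW : Fin m → Fin m → Bool) (i : Fin m)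
    (A : Finset (Fin m)) : Prop :=
  A.card = d i ∧ ∀ a ∈ A, a ≠ i ∧ GW a i = false

/-- `L` is the leftmost PON of `i`: the PON consisting of the `d i` admissible vertices
occurring earliest in the sequence. -/
def IsLeftmostPON {m : ℕ} (d : Fin m → ℕ) (GW : Fin m → Fin m → Bool) (i : Fin m)
    (L : Finset (Fin m)) : Prop :=
  IsPON d GW i L ∧ ∀ a ∈ L, ∀ b : Fin m, b ≠ i → GW b i = false → b ∉ L → a < b


/-!
Among the realizations agreeing with `G_W` on `W`, take one minimising the sum of the positions of
the out-neighbours of `i`. If `N⁺(i) ≠ L`, pick `a ∈ N⁺(i) \ L` and `b ∈ L \ N⁺(i)`; leftmostness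
puts `b` before `a`. The arc `i → a` can then be traded for `i → b` without changing any outdegree
or any out-neighbourhood in `W`: directly if `b → i` is absent, and otherwise by also redirecting an
arc out of `b` (and perhaps one into `b`), or by reversing a directed cycle `i → a → b → i` or
`i → a → x → b → i`. No trade exists only if `b` is adjacent to every vertex and every in-neighbour
of `b` outside `W` is also one of `a`. Since `i` is an in-neighbour of `a` but not of `b`, counting
neighbours then gives `d⁺(a) + d⁻_{G_W}(a) < d⁺(b) + d⁻_{G_W}(b)`, contradicting `G_W`-normality
because `b` lies past `W` and precedes `a`.
-/

open Finset

lemma Finset.card_insert_erase_of_mem_of_notMem {α : Type*} [DecidableEq α] {s : Finset α}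
    {a b : α} (ha : a ∈ s) (hb : b ∉ s) : #(insert b (s.erase a)) = #s := by
  rw [card_insert_of_notMem (fun h => hb (mem_of_mem_erase h)), card_erase_add_one ha]

lemma Finset.sum_insert_erase_lt {α M : Type*} [DecidableEq α] [AddCommMonoid M] [PartialOrder M]
    [IsOrderedCancelAddMonoid M] {s : Finset α} {f : α → M} {a b : α} (ha : a ∈ s) (hb : b ∉ s)
    (h : f b < f a) : ∑ x ∈ insert b (s.erase a), f x < ∑ x ∈ s, f x := by
  rw [sum_insert (fun h' => hb (mem_of_mem_erase h')), ← sum_erase_add _ _ ha, add_comm]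
  gcongr

variable {m : ℕ}

lemma mem_outNbrs {R : Fin m → Fin m → Bool} {u v : Fin m} :
    v ∈ outNbrs R u ↔ R u v = true := by
  simp [outNbrs]

lemma outDeg_eq_card_outNbrs (R : Fin m → Fin m → Bool) (u : Fin m) :
    outDeg R u = #(outNbrs R u) := rfl

namespace IsOriented

variable {R : Fin m → Fin m → Bool}

lemma loop_eq_false (hR : IsOriented R) (v : Fin m) : R v v = false := by
  cases h : R v v
  · rfl
  · simpa [h] using hR v v h

lemma ne_of_eq_true (hR : IsOriented R) {u v : Fin m} (h : R u v = true) : u ≠ v := by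
  rintro rfl
  simp [hR.loop_eq_false] at h

lemma card_insert_outNbrs_union_inNbrs (hR : IsOriented R) (t : Fin m) :
    #(insert t (outNbrs R t ∪ univ.filter fun u => R u t = true)) = outDeg R t + inDeg R t + 1 := by
  have hdisj : Disjoint (outNbrs R t) (univ.filter fun u => R u t = true) := by
    rw [disjoint_left]
    intro y hty hyt
    simp_all [mem_outNbrs, hR t y (mem_outNbrs.mp hty)]
  rw [card_insert_of_notMem (by simp [mem_outNbrs, hR.loop_eq_false]), card_union_of_disjoint hdisj]
  rfl

end IsOriented

section Redirect

variable (R : Fin m → Fin m → Bool) (u p q : Fin m)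

def redirect : Fin m → Fin m → Bool := fun x y =>
  if x = u then (if y = q then true else if y = p then false else R x y) else R x y

variable {R u p q}

lemma outNbrs_redirect_self :
    outNbrs (redirect R u p q) u = insert q ((outNbrs R u).erase p) := by
  ext y
  by_cases hyq : y = q <;> by_cases hyp : y = p <;> simp [redirect, mem_outNbrs, hyq, hyp]

lemma outNbrs_redirect_of_ne {v : Fin m} (hv : v ≠ u) :
    outNbrs (redirect R u p q) v = outNbrs R v := by
  ext y
  simp [redirect, mem_outNbrs, hv]

lemma outDeg_redirect (hp : R u p = true) (hq : R u q = false) (x : Fin m) :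
    outDeg (redirect R u p q) x = outDeg R x := by
  by_cases hx : x = u
  · subst hx
    rw [outDeg_eq_card_outNbrs, outDeg_eq_card_outNbrs, outNbrs_redirect_self]
    exact card_insert_erase_of_mem_of_notMem (mem_outNbrs.mpr hp) (by simp [mem_outNbrs, hq])
  · exact congrArg card (outNbrs_redirect_of_ne hx)

lemma IsOriented.redirect (hR : IsOriented R) (hqu : R q u = false) (hq : q ≠ u) :
    IsOriented (redirect R u p q) := by
  intro x y hxy
  unfold _root_.redirect at hxy ⊢
  have hyx := hR x y
  split_ifs at hxy ⊢ <;> subst_vars <;> simp_all [hR.loop_eq_false]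

end Redirect

section ReverseCycle

variable {k : ℕ} [NeZero k] (R : Fin m → Fin m → Bool) (c : Fin k → Fin m)

def reverseCycle : Fin m → Fin m → Bool := fun x y =>
  if ∃ j, c j = y ∧ c (j + 1) = x then true
  else if ∃ j, c j = x ∧ c (j + 1) = y then false else R x y

variable {R c}

lemma IsOriented.reverseCycle (hR : IsOriented R) (hc : ∀ j, R (c j) (c (j + 1)) = true) :
    IsOriented (reverseCycle R c) := by
  have harc : ∀ x y, (∃ j, c j = x ∧ c (j + 1) = y) → R x y = true := by
    rintro _ _ ⟨j, rfl, rfl⟩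
    exact hc j
  intro x y hxy
  have hyx := hR x y
  have h₁ := harc x y
  have h₂ := harc y x
  unfold _root_.reverseCycle at hxy ⊢
  split_ifs at hxy ⊢ <;> simp_all

lemma outNbrs_reverseCycle_of_notMem {x : Fin m} (hx : x ∉ Set.range c) :
    outNbrs (reverseCycle R c) x = outNbrs R x := by
  ext y
  simp only [Set.mem_range, not_exists] at hx
  simp [reverseCycle, mem_outNbrs, hx]

lemma outNbrs_reverseCycle_apply (hc : Function.Injective c) (j : Fin k) :
    outNbrs (reverseCycle R c) (c j) =
      insert (c (j - 1)) ((outNbrs R (c j)).erase (c (j + 1))) := by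
  ext y
  have hpred : (∃ j', c j' = y ∧ c (j' + 1) = c j) ↔ y = c (j - 1) := by
    simp only [hc.eq_iff, ← eq_sub_iff_add_eq]
    aesop
  have hsucc : (∃ j', c j' = c j ∧ c (j' + 1) = y) ↔ y = c (j + 1) := by
    simp only [hc.eq_iff]
    aesop
  simp only [reverseCycle, mem_outNbrs, hpred, hsucc, mem_insert, mem_erase]
  by_cases h₁ : y = c (j - 1) <;> by_cases h₂ : y = c (j + 1) <;> simp [h₁, h₂]

lemma outDeg_reverseCycle (hR : IsOriented R) (hinj : Function.Injective c)
    (hc : ∀ j, R (c j) (c (j + 1)) = true) (x : Fin m) :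
    outDeg (reverseCycle R c) x = outDeg R x := by
  by_cases hx : x ∈ Set.range c
  · obtain ⟨j, rfl⟩ := hx
    have hpred : c (j - 1) ∉ outNbrs R (c j) := by
      rw [mem_outNbrs, hR _ _ (by simpa using hc (j - 1))]
      simp
    rw [outDeg_eq_card_outNbrs, outDeg_eq_card_outNbrs, outNbrs_reverseCycle_apply hinj j]
    exact card_insert_erase_of_mem_of_notMem (mem_outNbrs.mpr (hc j)) hpred
  · exact congrArg card (outNbrs_reverseCycle_of_notMem hx)

end ReverseCycle

namespace IsGWNormal

variable {d : Fin m → ℕ} {W : Finset (Fin m)} {GW : Fin m → Fin m → Bool}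

lemma mem_iff (hn : IsGWNormal d W GW) (v : Fin m) : v ∈ W ↔ (v : ℕ) < #W := by
  have hinit : (univ.filter fun v : Fin m => (v : ℕ) < #W) = W :=
    eq_of_subset_of_card_le (fun v hv => hn.1 v (mem_filter.mp hv).2) <| by
      rw [Fin.card_filter_val_lt, min_eq_right ((card_le_univ W).trans_eq (Fintype.card_fin m))]
  conv_lhs => rw [← hinit]
  simp

lemma le_of_le (hn : IsGWNormal d W GW) {p q : Fin m} (hp : #W ≤ (p : ℕ)) (hpq : p ≤ q) :
    d p + inDeg GW p ≤ d q + inDeg GW q := by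
  obtain ⟨q, hq⟩ := q
  induction q, (show (p : ℕ) ≤ q from hpq) using Nat.le_induction with
  | base => rfl
  | succ n hpn ih =>
    refine (ih (by omega) (Fin.mk_le_mk.mpr hpn)).trans ?_
    rcases hn.2 ⟨n, by omega⟩ ⟨n + 1, hq⟩ (hp.trans hpn) rfl with h | h
    · exact h.le
    · exact h.1.le

end IsGWNormal

structure IsRealizationExtending (d : Fin m → ℕ) (W : Finset (Fin m))
    (GW R : Fin m → Fin m → Bool) : Prop where
  isRealization : IsRealization d R
  outNbrs_eq : ∀ v ∈ W, outNbrs R v = outNbrs GW v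

namespace IsRealizationExtending

variable {d : Fin m → ℕ} {W : Finset (Fin m)} {GW R : Fin m → Fin m → Bool} {i a b : Fin m}

lemma redirect (hR : IsRealizationExtending d W GW R) {u p q : Fin m} (hu : u ∉ W)
    (hp : R u p = true) (hq : R u q = false) (hqu : R q u = false) (hne : q ≠ u) :
    IsRealizationExtending d W GW (redirect R u p q) where
  isRealization := ⟨hR.isRealization.1.redirect hqu hne,
    fun x => (outDeg_redirect hp hq x).trans (hR.isRealization.2 x)⟩
  outNbrs_eq v hv :=
    (outNbrs_redirect_of_ne (ne_of_mem_of_not_mem hv hu)).trans (hR.outNbrs_eq v hv)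

lemma reverseCycle (hR : IsRealizationExtending d W GW R) {k : ℕ} [NeZero k] {c : Fin k → Fin m}
    (hinj : Function.Injective c) (hc : ∀ j, R (c j) (c (j + 1)) = true) (hW : ∀ j, c j ∉ W) :
    IsRealizationExtending d W GW (reverseCycle R c) where
  isRealization := ⟨hR.isRealization.1.reverseCycle hc,
    fun x => (outDeg_reverseCycle hR.isRealization.1 hinj hc x).trans (hR.isRealization.2 x)⟩
  outNbrs_eq v hv := (outNbrs_reverseCycle_of_notMem (by rintro ⟨j, rfl⟩; exact hW j hv)).trans
    (hR.outNbrs_eq v hv)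

lemma isPON_outNbrs (hR : IsRealizationExtending d W GW R) (hGW : ∀ v ∉ W, ∀ u, GW v u = false)
    (i : Fin m) : IsPON d GW i (outNbrs R i) := by
  refine ⟨hR.isRealization.2 i, fun x hx => ⟨(hR.isRealization.1.ne_of_eq_true
    (mem_outNbrs.mp hx)).symm, ?_⟩⟩
  by_cases hxW : x ∈ W
  · rw [← Bool.not_eq_true, ← mem_outNbrs, ← hR.outNbrs_eq x hxW, mem_outNbrs,
      hR.isRealization.1 i x (mem_outNbrs.mp hx)]
    simp
  · exact hGW x hxW i

lemma inDeg_eq (hR : IsRealizationExtending d W GW R) (hGW : ∀ v ∉ W, ∀ u, GW v u = false)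
    (t : Fin m) : inDeg R t = inDeg GW t + #(univ.filter fun u => u ∉ W ∧ R u t = true) := by
  have hW : (univ.filter fun u => R u t = true).filter (· ∈ W) =
      univ.filter fun u => GW u t = true := by
    ext u
    by_cases hu : u ∈ W
    · simp [hu, ← mem_outNbrs, hR.outNbrs_eq u hu]
    · simp [hu, hGW u hu]
  rw [inDeg, ← card_filter_add_card_filter_not (· ∈ W), hW, filter_filter, inDeg]
  simp_rw [and_comm]

lemma add_inDeg_lt (hR : IsRealizationExtending d W GW R) (hGW : ∀ v ∉ W, ∀ u, GW v u = false)
    (hi : i ∉ W) (hia : R i a = true) (hib : R i b = false)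
    (hfull : ∀ y ≠ b, R b y = true ∨ R y b = true)
    (hsub : ∀ x ∉ W, R x b = true → R x a = true) :
    d a + inDeg GW a < d b + inDeg GW b := by
  have hor := hR.isRealization.1
  have ha := (hor.card_insert_outNbrs_union_inNbrs a).symm.trans_le (card_le_univ _)
  have hb : outDeg R b + inDeg R b + 1 = m := by
    rw [← hor.card_insert_outNbrs_union_inNbrs b]
    refine (congrArg card (eq_univ_of_forall fun y => ?_)).trans (card_fin m)
    by_cases hy : y = b
    · simp [hy]
    · rcases hfull y hy with h | h <;> simp [mem_outNbrs, h]
  have hin : #(univ.filter fun u => u ∉ W ∧ R u b = true) + 1 ≤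
      #(univ.filter fun u => u ∉ W ∧ R u a = true) := by
    rw [← card_insert_of_notMem (s := univ.filter _) (a := i) (by simp [hib])]
    refine card_le_card fun x hx => ?_
    rcases mem_insert.mp hx with rfl | hx
    · simp [hi, hia]
    · simp only [mem_filter, mem_univ, true_and] at hx ⊢
      exact ⟨hx.1, hsub x hx.1 hx.2⟩
  rw [hR.inDeg_eq hGW, hR.isRealization.2] at ha hb
  simp only [Fintype.card_fin] at ha
  omega

lemma exists_swap_of_redirect (hR : IsRealizationExtending d W GW R) (hi : i ∉ W)
    (hia : R i a = true) (hib : R i b = false) (hbi : R b i = false) (hb : b ≠ i) :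
    ∃ R', IsRealizationExtending d W GW R' ∧ outNbrs R' i = insert b ((outNbrs R i).erase a) :=
  ⟨_root_.redirect R i a b, hR.redirect hi hia hib hbi hb, outNbrs_redirect_self⟩

lemma exists_swap_of_nonadj (hR : IsRealizationExtending d W GW R) {y : Fin m} (hi : i ∉ W)
    (hb : b ∉ W) (hia : R i a = true) (hib : R i b = false) (hbi : R b i = true)
    (hby : R b y = false) (hyb : R y b = false) (hy : y ≠ b) :
    ∃ R', IsRealizationExtending d W GW R' ∧ outNbrs R' i = insert b ((outNbrs R i).erase a) := by
  have hbi' : b ≠ i := hR.isRealization.1.ne_of_eq_true hbi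
  have hyi : y ≠ i := by rintro rfl; simp [hbi] at hby
  obtain ⟨R', hR', hR'i⟩ := (hR.redirect hb hbi hby hyb hy).exists_swap_of_redirect hi
    (by simpa [_root_.redirect, hbi'.symm] using hia)
    (by simpa [_root_.redirect, hbi'.symm] using hib)
    (by simp [_root_.redirect, hyi.symm]) hbi'
  exact ⟨R', hR', by rw [hR'i, outNbrs_redirect_of_ne hbi'.symm]⟩

lemma exists_swap_of_triangle (hR : IsRealizationExtending d W GW R) (hi : i ∉ W)
    (ha : a ∉ W) (hb : b ∉ W) (hia : R i a = true) (hab : R a b = true) (hbi : R b i = true) :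
    ∃ R', IsRealizationExtending d W GW R' ∧ outNbrs R' i = insert b ((outNbrs R i).erase a) := by
  have hc : ∀ j, R (![i, a, b] j) (![i, a, b] (j + 1)) = true := by
    intro j; fin_cases j <;> simp [hia, hab, hbi]
  have hinj : Function.Injective ![i, a, b] := by
    have := hR.isRealization.1.loop_eq_false
    intro j j' h; fin_cases j <;> fin_cases j' <;> simp_all
  refine ⟨_, hR.reverseCycle hinj hc (by intro j; fin_cases j <;> simpa), ?_⟩
  simpa using outNbrs_reverseCycle_apply (R := R) hinj 0

lemma exists_swap_of_square (hR : IsRealizationExtending d W GW R) {x : Fin m} (hi : i ∉ W)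
    (ha : a ∉ W) (hx : x ∉ W) (hb : b ∉ W) (hia : R i a = true) (hax : R a x = true)
    (hxb : R x b = true) (hbi : R b i = true) (hib : R i b = false) :
    ∃ R', IsRealizationExtending d W GW R' ∧ outNbrs R' i = insert b ((outNbrs R i).erase a) := by
  have hc : ∀ j, R (![i, a, x, b] j) (![i, a, x, b] (j + 1)) = true := by
    intro j; fin_cases j <;> simp [hia, hax, hxb, hbi]
  have hinj : Function.Injective ![i, a, x, b] := by
    have := hR.isRealization.1.loop_eq_false
    intro j j' h; fin_cases j <;> fin_cases j' <;> simp_all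
  refine ⟨_, hR.reverseCycle hinj hc (by intro j; fin_cases j <;> simpa), ?_⟩
  simpa using outNbrs_reverseCycle_apply (R := R) hinj 0

lemma exists_swap_of_add_inDeg_le (hR : IsRealizationExtending d W GW R)
    (hGW : ∀ v ∉ W, ∀ u, GW v u = false) (hi : i ∉ W) (ha : a ∉ W) (hb : b ∉ W)
    (hia : R i a = true) (hib : R i b = false) (hbi : R b i = true) (hba : R b a = true)
    (hnormal : d b + inDeg GW b ≤ d a + inDeg GW a) :
    ∃ R', IsRealizationExtending d W GW R' ∧ outNbrs R' i = insert b ((outNbrs R i).erase a) := by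
  have hor := hR.isRealization.1
  by_cases hy : ∃ y ≠ b, R b y = false ∧ R y b = false
  · obtain ⟨y, hy, hby, hyb⟩ := hy
    exact hR.exists_swap_of_nonadj hi hb hia hib hbi hby hyb hy
  have hfull : ∀ y ≠ b, R b y = true ∨ R y b = true := fun y hyb => by
    by_contra h
    exact hy ⟨y, hyb, by simpa using h⟩
  by_cases hx : ∃ x ∉ W, R x b = true ∧ R x a = false
  · obtain ⟨x, hx, hxb, hxa⟩ := hx
    cases hax : R a x
    · have hxb' : x ≠ b := hor.ne_of_eq_true hxb
      have hxa' : a ≠ x := by rintro rfl; simp [hor b a hba] at hxb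
      have hxi : i ≠ x := by rintro rfl; simp [hib] at hxb
      obtain ⟨R', hR', hR'i⟩ := (hR.redirect hx hxb hxa hax hxa').exists_swap_of_nonadj hi hb
        (by simpa [_root_.redirect, hxi] using hia) (by simpa [_root_.redirect, hxi] using hib)
        (by simpa [_root_.redirect, hxb'.symm] using hbi)
        (by simpa [_root_.redirect, hxb'.symm] using hor x b hxb)
        (by simp [_root_.redirect, hor.ne_of_eq_true hba]) hxb'
      exact ⟨R', hR', by rw [hR'i, outNbrs_redirect_of_ne hxi]⟩
    · exact hR.exists_swap_of_square hi ha hx hb hia hax hxb hbi hib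
  · refine absurd hnormal (not_le.mpr (hR.add_inDeg_lt hGW hi hia hib hfull fun x hxW hxb => ?_))
    by_contra hxa
    exact hx ⟨x, hxW, hxb, by simpa using hxa⟩

lemma exists_swap_of_lt (hR : IsRealizationExtending d W GW R)
    (hGW : ∀ v ∉ W, ∀ u, GW v u = false) (hn : IsGWNormal d W GW) (hi : i ∉ W)
    (hia : R i a = true) (hib : R i b = false) (hb : b ≠ i) (hGWb : GW b i = false)
    (hba : b < a) :
    ∃ R', IsRealizationExtending d W GW R' ∧ outNbrs R' i = insert b ((outNbrs R i).erase a) := by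
  cases hbi : R b i
  · exact hR.exists_swap_of_redirect hi hia hib hbi hb
  have hbW : b ∉ W := fun hbW => by
    have := hR.outNbrs_eq b hbW ▸ mem_outNbrs.mpr hbi
    simp [mem_outNbrs, hGWb] at this
  have hWb : #W ≤ (b : ℕ) := not_lt.mp ((hn.mem_iff b).not.mp hbW)
  have haW : a ∉ W := by
    rw [hn.mem_iff]
    exact not_lt.mpr (hWb.trans (Fin.lt_def.mp hba).le)
  cases hba' : R b a
  · cases hab : R a b
    · exact hR.exists_swap_of_nonadj hi hbW hia hib hbi hba' hab (ne_of_gt hba)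
    · exact hR.exists_swap_of_triangle hi haW hbW hia hab hbi
  · exact hR.exists_swap_of_add_inDeg_le hGW hi haW hbW hia hib hbi hba' (hn.le_of_le hWb hba.le)

lemma exists_outNbrs_eq_leftmost (hR : IsRealizationExtending d W GW R)
    (hGW : ∀ v ∉ W, ∀ u, GW v u = false) (hn : IsGWNormal d W GW) (hi : i ∉ W)
    {L : Finset (Fin m)} (hL : IsLeftmostPON d GW i L) :
    ∃ H, IsRealizationExtending d W GW H ∧ outNbrs H i = L := by
  induction hs : ∑ x ∈ outNbrs R i, (x : ℕ) using Nat.strong_induction_on generalizing R with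
  | _ s ih =>
  by_cases hRL : outNbrs R i = L
  · exact ⟨R, hR, hRL⟩
  have hPON := hR.isPON_outNbrs hGW i
  have hcard : #(outNbrs R i) = #L := hPON.1.trans hL.1.1.symm
  obtain ⟨a, haR, haL⟩ := not_subset.mp fun h => hRL (eq_of_subset_of_card_le h hcard.ge)
  obtain ⟨b, hbL, hbR⟩ := not_subset.mp fun h => hRL (eq_of_subset_of_card_le h hcard.le).symm
  have hba : b < a := hL.2 b hbL a (hPON.2 a haR).1 (hPON.2 a haR).2 haL
  obtain ⟨R', hR', hR'i⟩ := hR.exists_swap_of_lt hGW hn hi (mem_outNbrs.mp haR)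
    (by simpa [mem_outNbrs] using hbR) (hL.1.2 b hbL).1 (hL.1.2 b hbL).2 hba
  refine ih _ ?_ hR' rfl
  rw [← hs, hR'i]
  exact sum_insert_erase_lt haR hbR (Fin.lt_def.mp hba)

end IsRealizationExtending

theorem ovs_leftmost_realization_general {m : ℕ} (d : Fin m → ℕ) (W : Finset (Fin m))
    (GW : Fin m → Fin m → Bool)
    (hGWdeg : ∀ v : Fin m, outDeg GW v = if v ∈ W then d v else 0)
    (hnormal : IsGWNormal d W GW)
    (i : Fin m) (hi : i ∉ W)
    (L : Finset (Fin m)) (hL : IsLeftmostPON d GW i L) :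
    (∃ R : Fin m → Fin m → Bool, IsRealization d R ∧
        ∀ v ∈ W, outNbrs R v = outNbrs GW v) ↔
    (∃ R : Fin m → Fin m → Bool, IsRealization d R ∧
        (∀ v ∈ W, outNbrs R v = outNbrs GW v) ∧ outNbrs R i = L) := by
  have hGW : ∀ v ∉ W, ∀ u, GW v u = false := fun v hv u => by
    have h := hGWdeg v
    rw [if_neg hv, outDeg, card_eq_zero, filter_eq_empty_iff] at h
    simpa using h (mem_univ u)
  constructor
  · rintro ⟨R, hR, hRW⟩
    obtain ⟨H, hH, hHi⟩ :=
      IsRealizationExtending.exists_outNbrs_eq_leftmost ⟨hR, hRW⟩ hGW hnormal hi hL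
    exact ⟨H, hH.1, hH.2, hHi⟩
  · rintro ⟨R, hR, hRW, -⟩
    exact ⟨R, hR, hRW⟩

/-- Theorem 3.1. Let `d` be an OVS on `Fin m`, `W ⊊ V` and `G_W` an
oriented graph giving every vertex of `W` its prescribed outdegree and every other vertex
outdegree `0`, such that `d` is `G_W`-normal. Let `i ∉ W` with `d i > 0` and let `L` be
the leftmost PON of `i`. Then `d` has a realization agreeing with `G_W` on the
out-neighbourhoods of `W` iff it has one that moreover has out-neighbourhood `L` at `i`. -/
theorem ovs_leftmost_realization {m : ℕ} (d : Fin m → ℕ) (W : Finset (Fin m))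
    (hW : W ⊂ Finset.univ) (GW : Fin m → Fin m → Bool) (hGWor : IsOriented GW)
    (hGWdeg : ∀ v : Fin m, outDeg GW v = if v ∈ W then d v else 0)
    (hnormal : IsGWNormal d W GW)
    (i : Fin m) (hi : i ∉ W) (hdi : 0 < d i)
    (L : Finset (Fin m)) (hL : IsLeftmostPON d GW i L) :
    (∃ R : Fin m → Fin m → Bool, IsRealization d R ∧
        ∀ v ∈ W, outNbrs R v = outNbrs GW v) ↔
    (∃ R : Fin m → Fin m → Bool, IsRealization d R ∧
        (∀ v ∈ W, outNbrs R v = outNbrs GW v) ∧ outNbrs R i = L) :=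
  ovs_leftmost_realization_general d W GW hGWdeg hnormal i hi L hL
end

section
/- Let T_{n₁,…,n_t} be a 2H-tree and let k be a nonnegative integer. Then T_{n₁,…,n_t} admits a star edge coloring with t + k colors if and only if there exists an oriented graph on t + k vertices v₁,…,v_{t+k} in which the outdegree of vᵢ equals nᵢ for every 1 ≤ i ≤ t and the outdegree of vᵢ equals 0 for every t < i ≤ t + k. -/
/-- A star edge coloring of `G` with `k` colors: a proper edge coloring such that
no path or cycle of length four (four edges) is bi-colored. The walk
`a-b-x-y-z` ranges over all paths of length four (`a,b,x,y,z` distinct) and all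
cycles of length four (`z = a` and `a,b,x,y` distinct). -/
def IsStarEdgeColoring {V : Type*} (G : SimpleGraph V) {k : ℕ} (c : Sym2 V → Fin k) : Prop :=
  (∀ ⦃u v w : V⦄, G.Adj u v → G.Adj u w → v ≠ w → c s(u, v) ≠ c s(u, w)) ∧
  (∀ a b x y z : V, G.Adj a b → G.Adj b x → G.Adj x y → G.Adj y z →
    a ≠ x → a ≠ y → b ≠ y → b ≠ z → x ≠ z →
    ¬(c s(a, b) = c s(x, y) ∧ c s(b, x) = c s(y, z)))

/-- The star chromatic index of `G`: the least `k` admitting a star edge coloring. -/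
noncomputable def starChromaticIndex {V : Type*} (G : SimpleGraph V) : ℕ :=
  sInf {k : ℕ | ∃ c : Sym2 V → Fin k, IsStarEdgeColoring G c}
/-- The 2H-tree `T_{n₁,…,n_t}`: a root (`none`), its `t` neighbours `uᵢ = some ⟨i, none⟩`,
and for each `i`, `n i` further leaves `some ⟨i, some j⟩` adjacent to `uᵢ`. -/
def twoHTree (t : ℕ) (n : Fin t → ℕ) :
    SimpleGraph (Option (Σ i : Fin t, Option (Fin (n i)))) :=
  SimpleGraph.fromRel (fun x y =>
    (x = none ∧ ∃ i : Fin t, y = some ⟨i, none⟩) ∨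
    (∃ (i : Fin t) (j : Fin (n i)), x = some ⟨i, none⟩ ∧ y = some ⟨i, some j⟩))
/-! At a hub `uᵢ` a proper edge colouring shows the colour `aᵢ` of `u uᵢ` and `nᵢ` distinct
colours on `E_{uᵢ}`, all different from `aᵢ`. The only paths with four edges are
leaf–`uᵢ`–`u`–`uⱼ`–leaf, so the colouring is star exactly when no `i ≠ j` has `aⱼ` among the
pendant colours at `uᵢ` and `aᵢ` among those at `uⱼ`. As the `aᵢ` are distinct we may rename the
colours so that `aᵢ = i`; the arcs from `i` to the pendant colours at `uᵢ` then form an oriented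
graph on the `t + k` colours with outdegrees `nᵢ`, and `0` at the `k` colours not used on root
edges. Read backwards, an oriented graph with these outdegrees is such a colouring. -/

open Function Finset

lemma Equiv.Perm.exists_apply_eq_of_injective {α β : Type*} [Finite β] {f g : α → β}
    (hf : Injective f) (hg : Injective g) : ∃ σ : Equiv.Perm β, ∀ x, σ (f x) = g x := by
  classical
  refine ⟨((Equiv.ofInjective f hf).symm.trans (Equiv.ofInjective g hg)).extendSubtype,
    fun x => ?_⟩
  rw [Equiv.extendSubtype_apply_of_mem _ _ (Set.mem_range_self x)]
  change ((Equiv.ofInjective g hg)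
    ((Equiv.ofInjective f hf).symm (Equiv.ofInjective f hf x)) : β) = g x
  rw [Equiv.symm_apply_apply]
  rfl

lemma IsOriented.apply_self {m : ℕ} {R : Fin m → Fin m → Bool} (hR : IsOriented R) (i : Fin m) :
    R i i = false :=
  Bool.eq_false_iff.mpr fun h => by simpa [h] using hR i i h

namespace TwoHTree

variable {t : ℕ} {n : Fin t → ℕ}

abbrev Vertex (t : ℕ) (n : Fin t → ℕ) := Option (Σ i : Fin t, Option (Fin (n i)))

abbrev root : Vertex t n := none

abbrev hub (i : Fin t) : Vertex t n := some ⟨i, none⟩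

abbrev leaf (i : Fin t) (j : Fin (n i)) : Vertex t n := some ⟨i, some j⟩

lemma hub_injective : Injective (hub : Fin t → Vertex t n) := by
  intro i i' h
  simp only [Option.some.injEq, Sigma.mk.inj_iff] at h
  exact h.1

lemma leaf_injective (i : Fin t) : Injective (leaf (n := n) i) := by
  intro j j' h
  simpa using h

lemma adj_root_iff {w : Vertex t n} : (twoHTree t n).Adj root w ↔ ∃ i, w = hub i := by
  rw [twoHTree, SimpleGraph.fromRel_adj]
  aesop

lemma adj_hub_iff {i : Fin t} {w : Vertex t n} :
    (twoHTree t n).Adj (hub i) w ↔ w = root ∨ ∃ j, w = leaf i j := by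
  rw [twoHTree, SimpleGraph.fromRel_adj]
  aesop

lemma adj_leaf_iff {i : Fin t} {j : Fin (n i)} {w : Vertex t n} :
    (twoHTree t n).Adj (leaf i j) w ↔ w = hub i := by
  rw [twoHTree, SimpleGraph.fromRel_adj]
  aesop

lemma adj_root_hub (i : Fin t) : (twoHTree t n).Adj root (hub i) :=
  adj_root_iff.mpr ⟨i, rfl⟩

lemma adj_hub_leaf (i : Fin t) (j : Fin (n i)) : (twoHTree t n).Adj (hub i) (leaf i j) :=
  adj_hub_iff.mpr (Or.inr ⟨j, rfl⟩)

lemma eq_leaf_hub_root_hub_leaf {a b x y z : Vertex t n} (hab : (twoHTree t n).Adj a b)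
    (hbx : (twoHTree t n).Adj b x) (hxy : (twoHTree t n).Adj x y)
    (hyz : (twoHTree t n).Adj y z) (hax : a ≠ x) (hby : b ≠ y) (hxz : x ≠ z) :
    ∃ i i' j j', i ≠ i' ∧
      a = leaf i j ∧ b = hub i ∧ x = root ∧ y = hub i' ∧ z = leaf i' j' := by
  rcases b with _ | ⟨i, _ | j⟩
  · obtain ⟨i, rfl⟩ := adj_root_iff.mp hbx
    rcases adj_hub_iff.mp hxy with rfl | ⟨j, rfl⟩
    · exact absurd rfl hby
    · exact absurd (adj_leaf_iff.mp hyz).symm hxz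
  · rcases adj_hub_iff.mp hbx with rfl | ⟨j', rfl⟩
    · rcases adj_hub_iff.mp hab.symm with rfl | ⟨j, rfl⟩
      · exact absurd rfl hax
      obtain ⟨i', rfl⟩ := adj_root_iff.mp hxy
      rcases adj_hub_iff.mp hyz with rfl | ⟨j', rfl⟩
      · exact absurd rfl hxz
      exact ⟨i, i', j, j', fun h => hby (h ▸ rfl), rfl, rfl, rfl, rfl, rfl⟩
    · exact absurd (adj_leaf_iff.mp hxy).symm hby
  · exact absurd ((adj_leaf_iff.mp hab.symm).trans (adj_leaf_iff.mp hbx).symm) hax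

structure Palette (n : Fin t → ℕ) (m : ℕ) where
  rootColor : Fin t → Fin m
  pendantColor : ∀ i, Fin (n i) → Fin m
  rootColor_injective : Injective rootColor
  pendantColor_injective : ∀ i, Injective (pendantColor i)
  pendantColor_ne_rootColor : ∀ i j, pendantColor i j ≠ rootColor i
  not_bicolored : ∀ i i' j j', i ≠ i' →
    pendantColor i j = rootColor i' → pendantColor i' j' ≠ rootColor i

end TwoHTree

open TwoHTree

def IsStarEdgeColoring.palette {t m : ℕ} {n : Fin t → ℕ} {c : Sym2 (Vertex t n) → Fin m}
    (hc : IsStarEdgeColoring (twoHTree t n) c) : Palette n m where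
  rootColor i := c s(root, hub i)
  pendantColor i j := c s(hub i, leaf i j)
  rootColor_injective i i' h := by
    by_contra hii'
    exact hc.1 (adj_root_hub i) (adj_root_hub i') (hub_injective.ne hii') h
  pendantColor_injective i j j' h := by
    by_contra hjj'
    exact hc.1 (adj_hub_leaf i j) (adj_hub_leaf i j') ((leaf_injective i).ne hjj') h
  pendantColor_ne_rootColor i j h := by
    rw [Sym2.eq_swap (a := root)] at h
    exact hc.1 (adj_hub_leaf i j) (adj_root_hub i).symm (by simp) h
  not_bicolored i i' j j' hii' h₁ h₂ := by
    rw [Sym2.eq_swap (a := hub i)] at h₁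
    rw [Sym2.eq_swap (a := root)] at h₂
    exact hc.2 _ _ _ _ _ (adj_hub_leaf i j).symm (adj_root_hub i).symm (adj_root_hub i')
      (adj_hub_leaf i' j') (by simp) nofun (hub_injective.ne hii') nofun (by simp)
      ⟨h₁, h₂.symm⟩

namespace TwoHTree.Palette

variable {t m : ℕ} {n : Fin t → ℕ}

def edgeColor (P : Palette n m) (d : Fin m) : Vertex t n → Vertex t n → Fin m
  | none, some ⟨i, none⟩ | some ⟨i, none⟩, none => P.rootColor i
  | some ⟨_, none⟩, some ⟨i, some j⟩ | some ⟨i, some j⟩, some ⟨_, none⟩ => P.pendantColor i j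
  | _, _ => d

lemma edgeColor_comm (P : Palette n m) (d : Fin m) (x y : Vertex t n) :
    P.edgeColor d x y = P.edgeColor d y x := by
  rcases x with _ | ⟨i, _ | j⟩ <;> rcases y with _ | ⟨i', _ | j'⟩ <;> rfl

def coloring (P : Palette n m) (d : Fin m) : Sym2 (Vertex t n) → Fin m :=
  Sym2.lift ⟨P.edgeColor d, P.edgeColor_comm d⟩

lemma isStarEdgeColoring_coloring (P : Palette n m) (d : Fin m) :
    IsStarEdgeColoring (twoHTree t n) (P.coloring d) := by
  refine ⟨fun u v w huv huw hvw => ?_, fun a b x y z hab hbx hxy hyz hax _ hby _ hxz => ?_⟩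
  · rcases u with _ | ⟨i, _ | j⟩
    · obtain ⟨i, rfl⟩ := adj_root_iff.mp huv
      obtain ⟨i', rfl⟩ := adj_root_iff.mp huw
      exact P.rootColor_injective.ne fun h => hvw (h ▸ rfl)
    · rcases adj_hub_iff.mp huv with rfl | ⟨j, rfl⟩ <;>
        rcases adj_hub_iff.mp huw with rfl | ⟨j', rfl⟩
      · exact absurd rfl hvw
      · exact (P.pendantColor_ne_rootColor i j').symm
      · exact P.pendantColor_ne_rootColor i j
      · exact (P.pendantColor_injective i).ne fun h => hvw (h ▸ rfl)
    · exact absurd ((adj_leaf_iff.mp huv).trans (adj_leaf_iff.mp huw).symm) hvw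
  · obtain ⟨i, i', j, j', hii', rfl, rfl, rfl, rfl, rfl⟩ :=
      eq_leaf_hub_root_hub_leaf hab hbx hxy hyz hax hby hxz
    exact fun ⟨h₁, h₂⟩ => P.not_bicolored i i' j j' hii' h₁ h₂.symm

def relabel {m' : ℕ} (P : Palette n m) (f : Fin m ↪ Fin m') : Palette n m' where
  rootColor := f ∘ P.rootColor
  pendantColor i := f ∘ P.pendantColor i
  rootColor_injective := f.injective.comp P.rootColor_injective
  pendantColor_injective i := f.injective.comp (P.pendantColor_injective i)
  pendantColor_ne_rootColor i j := f.injective.ne (P.pendantColor_ne_rootColor i j)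
  not_bicolored i i' j j' hii' h :=
    f.injective.ne (P.not_bicolored i i' j j' hii' (f.injective h))

variable {k : ℕ}

def ofOrientation {R : Fin (t + k) → Fin (t + k) → Bool} (hR : IsOriented R)
    (hdeg : ∀ i : Fin (t + k), outDeg R i = if h : (i : ℕ) < t then n ⟨i, h⟩ else 0) :
    Palette n (t + k) :=
  have hcard (i : Fin t) : (outNbrs R (Fin.castAdd k i)).card = n i :=
    (hdeg (Fin.castAdd k i)).trans (by simp)
  have hR_out (i : Fin t) (j : Fin (n i)) :
      R (Fin.castAdd k i) ((outNbrs R _).orderEmbOfFin (hcard i) j) = true :=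
    (Finset.mem_filter.mp ((outNbrs R _).orderEmbOfFin_mem (hcard i) j)).2
  { rootColor := Fin.castAdd k
    pendantColor i := (outNbrs R _).orderEmbOfFin (hcard i)
    rootColor_injective := Fin.castAdd_injective t k
    pendantColor_injective i := ((outNbrs R _).orderEmbOfFin (hcard i)).injective
    pendantColor_ne_rootColor i j h := by
      simpa [h, hR.apply_self] using hR_out i j
    not_bicolored i i' j j' _ h₁ h₂ := by
      have h := hR_out i' j'
      rw [h₂, hR _ _ (h₁ ▸ hR_out i j)] at h
      exact Bool.false_ne_true h }

lemma exists_orientation_of_rootColor_eq_castAdd (P : Palette n (t + k))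
    (hP : ∀ i, P.rootColor i = Fin.castAdd k i) :
    ∃ R : Fin (t + k) → Fin (t + k) → Bool, IsOriented R ∧
      ∀ i : Fin (t + k), outDeg R i = if h : (i : ℕ) < t then n ⟨i, h⟩ else 0 := by
  classical
  refine ⟨fun v w => decide (∃ i j, Fin.castAdd k i = v ∧ P.pendantColor i j = w), ?_, ?_⟩
  · intro v w hvw
    simp only [decide_eq_true_eq, decide_eq_false_iff_not, not_exists, not_and] at hvw ⊢
    obtain ⟨i, j, rfl, rfl⟩ := hvw
    intro i' j' h₁ h₂
    rw [← hP] at h₁ h₂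
    obtain rfl | hii' := eq_or_ne i i'
    · exact P.pendantColor_ne_rootColor i j h₁.symm
    · exact P.not_bicolored i i' j j' hii' h₁.symm h₂
  · intro v
    split_ifs with hv
    · obtain ⟨i, rfl⟩ : ∃ i : Fin t, Fin.castAdd k i = v := ⟨⟨v, hv⟩, rfl⟩
      have hfilter : univ.filter (fun w => decide (∃ i' j, Fin.castAdd k i' = Fin.castAdd k i ∧
          P.pendantColor i' j = w) = true) = univ.image (P.pendantColor i) := by
        ext w
        simp
      rw [outDeg, hfilter, card_image_of_injective _ (P.pendantColor_injective i)]
      simp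
    · rw [outDeg, card_eq_zero, filter_eq_empty_iff]
      rintro w - h
      simp only [exists_and_left, decide_eq_true_eq] at h
      obtain ⟨i, rfl, -⟩ := h
      exact hv i.isLt

lemma exists_orientation (P : Palette n (t + k)) :
    ∃ R : Fin (t + k) → Fin (t + k) → Bool, IsOriented R ∧
      ∀ i : Fin (t + k), outDeg R i = if h : (i : ℕ) < t then n ⟨i, h⟩ else 0 := by
  obtain ⟨σ, hσ⟩ :=
    Equiv.Perm.exists_apply_eq_of_injective (Fin.castAdd_injective t k) P.rootColor_injective
  exact (P.relabel σ.symm.toEmbedding).exists_orientation_of_rootColor_eq_castAdd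
    fun i => σ.symm_apply_eq.mpr (hσ i).symm

end TwoHTree.Palette

theorem twoHTree_star_coloring_iff_orientation_general (t k : ℕ) (ht : 1 ≤ t)
    (n : Fin t → ℕ) :
    (∃ c : Sym2 (Option (Σ i : Fin t, Option (Fin (n i)))) → Fin (t + k),
        IsStarEdgeColoring (twoHTree t n) c) ↔
    (∃ R : Fin (t + k) → Fin (t + k) → Bool, IsOriented R ∧
        ∀ i : Fin (t + k), outDeg R i = if h : (i : ℕ) < t then n ⟨i, h⟩ else 0) := by
  constructor
  · rintro ⟨c, hc⟩
    exact hc.palette.exists_orientation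
  · rintro ⟨R, hR, hdeg⟩
    exact ⟨_, (Palette.ofOrientation hR hdeg).isStarEdgeColoring_coloring ⟨0, by omega⟩⟩

/-- Theorem 4.3. The 2H-tree `T_{n₁,…,n_t}` admits a star edge coloring
with `t + k` colors iff there is an oriented graph on `t + k` vertices in which vertex
`i` has outdegree `n i` for `i < t` and outdegree `0` otherwise. -/
theorem twoHTree_star_coloring_iff_orientation (t k : ℕ) (ht : 1 ≤ t)
    (n : Fin t → ℕ) (hn : Monotone n) :
    (∃ c : Sym2 (Option (Σ i : Fin t, Option (Fin (n i)))) → Fin (t + k),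
        IsStarEdgeColoring (twoHTree t n) c) ↔
    (∃ R : Fin (t + k) → Fin (t + k) → Bool, IsOriented R ∧
        ∀ i : Fin (t + k), outDeg R i = if h : (i : ℕ) < t then n ⟨i, h⟩ else 0) :=
  twoHTree_star_coloring_iff_orientation_general t k ht n
end

section
/- Let T_{(r,t)} be the r-regular 2H-tree with r ≥ 1 and t ≥ 1. If t ≥ 2r, then χ'_s(T_{(r,t)}) ≤ t. -/
/-!
Colour the edge `u uᵢ` with `i` and the edges from `uᵢ` to its `r - 1` leaves with
`i + 1, …, i + r - 1 (mod t)`; as `r ≤ t` this colouring is proper. The only paths with four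
edges are `leaf – uᵢ – u – uᵢ' – leaf`, and a bicoloured one would give `i' ≡ i + a` and
`i ≡ i' + b (mod t)` with `1 ≤ a, b ≤ r - 1`, so `t ∣ a + b`, impossible as `2 ≤ a + b < t`.
-/

theorem starChromaticIndex_le {V : Type*} {G : SimpleGraph V} {k : ℕ} {c : Sym2 V → Fin k}
    (hc : IsStarEdgeColoring G c) : starChromaticIndex G ≤ k :=
  Nat.sInf_le ⟨c, hc⟩

open Fin.NatCast in
theorem Fin.natCast_inj_of_lt {n a b : ℕ} [NeZero n] (ha : a < n) (hb : b < n) :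
    (a : Fin n) = b ↔ a = b := by
  rw [Fin.ext_iff, Fin.val_cast_of_lt ha, Fin.val_cast_of_lt hb]

namespace twoHTree

variable {t : ℕ} {n : Fin t → ℕ}

@[simp]
theorem adj_none {y : Option (Σ i : Fin t, Option (Fin (n i)))} :
    (twoHTree t n).Adj none y ↔ ∃ i, y = some ⟨i, none⟩ := by
  rcases y with _ | ⟨i, _ | j⟩ <;> simp [twoHTree]

@[simp]
theorem adj_inner {i : Fin t} {y : Option (Σ i : Fin t, Option (Fin (n i)))} :
    (twoHTree t n).Adj (some ⟨i, none⟩) y ↔ y = none ∨ ∃ j, y = some ⟨i, some j⟩ := by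
  rcases y with _ | ⟨i', o⟩
  · simp [twoHTree]
  obtain rfl | hi := eq_or_ne i' i
  · cases o <;> simp [twoHTree]
  · simp [twoHTree, hi, hi.symm]

@[simp]
theorem adj_leaf {i : Fin t} {j : Fin (n i)} {y : Option (Σ i : Fin t, Option (Fin (n i)))} :
    (twoHTree t n).Adj (some ⟨i, some j⟩) y ↔ y = some ⟨i, none⟩ := by
  rcases y with _ | ⟨i', o⟩
  · simp [twoHTree]
  obtain rfl | hi := eq_or_ne i' i
  · cases o <;> simp [twoHTree]
  · simp [twoHTree, hi, hi.symm]

section edgeColoring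

variable {k : ℕ} [NeZero k] (κ : (Σ i : Fin t, Option (Fin (n i))) → Fin k)

/-- Every edge of the tree gets the label of its endpoint farther from the root; the value `0`
on non-edges is irrelevant. -/
def edgeColoring : Sym2 (Option (Σ i : Fin t, Option (Fin (n i)))) → Fin k :=
  Sym2.lift ⟨fun x y => match x, y with
    | none, some v | some v, none => κ v
    | some ⟨_, none⟩, some v@⟨_, some _⟩ | some v@⟨_, some _⟩, some ⟨_, none⟩ => κ v
    | _, _ => 0, by rintro (_ | ⟨i, _ | j⟩) (_ | ⟨i', _ | j'⟩) <;> rfl⟩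

theorem edgeColoring_proper (hroot : Function.Injective fun i => κ ⟨i, none⟩)
    (hinner : ∀ i, Function.Injective fun o => κ ⟨i, o⟩) ⦃u v w⦄
    (huv : (twoHTree t n).Adj u v) (huw : (twoHTree t n).Adj u w) (hvw : v ≠ w) :
    edgeColoring κ s(u, v) ≠ edgeColoring κ s(u, w) := by
  rcases u with _ | ⟨i, _ | j⟩
  · simp only [adj_none] at huv huw
    obtain ⟨i, rfl⟩ := huv
    obtain ⟨i', rfl⟩ := huw
    simpa [edgeColoring] using fun h => hvw (by rw [hroot h])
  · simp only [adj_inner] at huv huw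
    rcases huv with rfl | ⟨j, rfl⟩ <;> rcases huw with rfl | ⟨j', rfl⟩
    · exact absurd rfl hvw
    all_goals simpa [edgeColoring] using (hinner i).ne (by simp_all)
  · simp only [adj_leaf] at huv huw
    exact absurd (huv.trans huw.symm) hvw

theorem edgeColoring_not_bicolored
    (hstar : ∀ i i' j j', i ≠ i' → κ ⟨i, some j⟩ = κ ⟨i', none⟩ → κ ⟨i, none⟩ ≠ κ ⟨i', some j'⟩)
    {a b x y z} (hab : (twoHTree t n).Adj a b) (hbx : (twoHTree t n).Adj b x)
    (hxy : (twoHTree t n).Adj x y) (hyz : (twoHTree t n).Adj y z)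
    (hax : a ≠ x) (hby : b ≠ y) (hxz : x ≠ z) :
    ¬(edgeColoring κ s(a, b) = edgeColoring κ s(x, y) ∧
      edgeColoring κ s(b, x) = edgeColoring κ s(y, z)) := by
  rw [SimpleGraph.adj_comm] at hab hbx
  rcases x with _ | ⟨i, _ | j⟩
  · simp only [adj_none] at hbx hxy
    obtain ⟨i, rfl⟩ := hbx
    obtain ⟨i', rfl⟩ := hxy
    simp only [adj_inner] at hab hyz
    obtain ⟨j, rfl⟩ := hab.resolve_left hax
    obtain ⟨j', rfl⟩ := hyz.resolve_left hxz.symm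
    simpa [edgeColoring] using hstar i i' j j' (by rintro rfl; exact hby rfl)
  · simp only [adj_inner] at hbx hxy
    rcases hbx with rfl | ⟨j, rfl⟩
    · obtain ⟨j, rfl⟩ := hxy.resolve_left hby.symm
      exact absurd (adj_leaf.mp hyz).symm hxz
    · exact absurd (adj_leaf.mp hab) hax
  · simp only [adj_leaf] at hbx hxy
    exact absurd (hbx.trans hxy.symm) hby

theorem isStarEdgeColoring_edgeColoring (hroot : Function.Injective fun i => κ ⟨i, none⟩)
    (hinner : ∀ i, Function.Injective fun o => κ ⟨i, o⟩)
    (hstar : ∀ i i' j j', i ≠ i' → κ ⟨i, some j⟩ = κ ⟨i', none⟩ → κ ⟨i, none⟩ ≠ κ ⟨i', some j'⟩) :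
    IsStarEdgeColoring (twoHTree t n) (edgeColoring κ) :=
  ⟨edgeColoring_proper κ hroot hinner, fun _ _ _ _ _ hab hbx hxy hyz hax _ hby _ hxz =>
    edgeColoring_not_bicolored κ hstar hab hbx hxy hyz hax hby hxz⟩

end edgeColoring

section cyclicLabel

open Fin.NatCast

variable {m : ℕ} [NeZero t]

def cyclicLabel : (Σ _ : Fin t, Option (Fin m)) → Fin t
  | ⟨i, none⟩ => i
  | ⟨i, some j⟩ => i + ((j + 1 : ℕ) : Fin t)

theorem cyclicLabel_inner_injective (hm : m < t) (i : Fin t) :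
    Function.Injective fun o => cyclicLabel (m := m) ⟨i, o⟩ := by
  have shift_inj {a b : ℕ} (ha : a < t) (hb : b < t) (h : i + (a : Fin t) = i + b) : a = b :=
    (Fin.natCast_inj_of_lt ha hb).mp (add_left_cancel h)
  rintro (_ | j) (_ | j') h
  · rfl
  · have := shift_inj (a := 0) (b := j' + 1) (by omega) (by omega)
      (by rwa [Fin.natCast_zero, add_zero])
    omega
  · have := shift_inj (a := j + 1) (b := 0) (by omega) (by omega)
      (by rwa [Fin.natCast_zero, add_zero])
    omega
  · have := shift_inj (by omega) (by omega) h
    simp_all [Fin.ext_iff]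

theorem cyclicLabel_not_bicolored (hm : 2 * m < t) (i i' : Fin t) (j j' : Fin m)
    (h : cyclicLabel ⟨i, some j⟩ = cyclicLabel (m := m) ⟨i', none⟩) :
    cyclicLabel (m := m) ⟨i, none⟩ ≠ cyclicLabel ⟨i', some j'⟩ := by
  intro h'
  simp only [cyclicLabel] at h h'
  have : ((j + 1 + (j' + 1) : ℕ) : Fin t) = ((0 : ℕ) : Fin t) := by
    rw [Fin.natCast_zero, Nat.cast_add]
    exact left_eq_add.mp (by rw [← add_assoc, h]; exact h')
  have := (Fin.natCast_inj_of_lt (by omega) (by omega)).mp this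
  omega

theorem isStarEdgeColoring_edgeColoring_cyclicLabel (hm : 2 * m < t) :
    IsStarEdgeColoring (twoHTree t fun _ => m) (edgeColoring cyclicLabel) :=
  isStarEdgeColoring_edgeColoring _ Function.injective_id (cyclicLabel_inner_injective (by omega))
    fun i i' j j' _ => cyclicLabel_not_bicolored hm i i' j j'

end cyclicLabel

end twoHTree

theorem regular_twoHTree_star_le_of_large_t_general (r t : ℕ) (ht : 1 ≤ t)
    (h : 2 * r ≤ t) :
    starChromaticIndex (twoHTree t (fun _ => r - 1)) ≤ t := by
  have : NeZero t := ⟨by omega⟩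
  exact starChromaticIndex_le (twoHTree.isStarEdgeColoring_edgeColoring_cyclicLabel (by omega))

/-- Lemma 6.2, second case. For the `r`-regular 2H-tree `T_{(r,t)}`,
if `t ≥ 2r` then `χ'_s(T_{(r,t)}) ≤ t`. -/
theorem regular_twoHTree_star_le_of_large_t (r t : ℕ) (hr : 1 ≤ r) (ht : 1 ≤ t)
    (h : 2 * r ≤ t) :
    starChromaticIndex (twoHTree t (fun _ => r - 1)) ≤ t :=
  regular_twoHTree_star_le_of_large_t_general r t ht h
end

section
/- Let T_{n₁,…,n_t} be a 2H-tree and let σ_t = n₁ + … + n_t. Then, as an inequality of rational numbers, χ'_s(T_{n₁,…,n_t}) ≥ σ_t/t + (t+1)/2. -/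
open Finset

/-! Fix a star edge colouring with `k` colours. The `t` root edges get distinct colours
`c₁, …, c_t`, and the `nᵢ` pendant edges at `uᵢ` get distinct colours avoiding `cᵢ`; those among
them that are not root colours number at most `k - t`. If `cⱼ` is used at `uᵢ` and `cᵢ` at `uⱼ`,
the path through `uᵢ, u, uⱼ` is bicoloured, so for every pair `{i, j}` at most one of these
happens. Summing over `i` gives `σ_t ≤ t (k - t) + t (t - 1) / 2`, which rearranges to the bound. -/

theorem sum_card_filter_le_choose_two_of_asymm {α : Type*} [Fintype α] [DecidableEq α]
    (r : α → α → Prop) [DecidableRel r] (hr : ∀ a b, r a b → ¬r b a) :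
    ∑ a, #{b | r a b} ≤ (Fintype.card α).choose 2 := by
  let P : Finset (α × α) := {p | r p.1 p.2}
  have hP : ∑ a, #{b | r a b} = #P := by
    simp only [P, card_filter, Fintype.sum_prod_type]
  have hPoffDiag : P ⊆ univ.offDiag := fun p hp => by
    simp only [P, mem_filter, mem_univ, true_and] at hp
    exact mem_offDiag.mpr ⟨mem_univ _, mem_univ _, fun h => hr _ _ hp (by rwa [h] at hp ⊢)⟩
  have hinj : Set.InjOn Sym2.mk.uncurry (P : Set (α × α)) := by
    rintro p hp q hq hpq
    simp only [P, mem_coe, mem_filter, mem_univ, true_and] at hp hq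
    rcases Sym2.mk_eq_mk_iff.mp hpq with h | rfl
    · exact h
    · exact absurd hp (hr _ _ hq)
  calc ∑ a, #{b | r a b} = #(P.image Sym2.mk.uncurry) := by rw [hP, card_image_of_injOn hinj]
    _ ≤ #(univ.offDiag.image Sym2.mk.uncurry) := card_le_card (image_subset_image hPoffDiag)
    _ = (Fintype.card α).choose 2 := Sym2.card_image_offDiag _

theorem exists_isStarEdgeColoring {V : Type*} [Finite V] (G : SimpleGraph V) :
    ∃ (k : ℕ) (c : Sym2 V → Fin k), IsStarEdgeColoring G c := by
  have := Fintype.ofFinite V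
  let e := Fintype.equivFin (Sym2 V)
  refine ⟨_, e, fun u v w _ _ hvw h => hvw (Sym2.congr_right.mp (e.injective h)), ?_⟩
  rintro a b x y z - - - - hax hay - - - ⟨h, -⟩
  rcases Sym2.eq_iff.mp (e.injective h) with ⟨rfl, -⟩ | ⟨rfl, -⟩
  exacts [hax rfl, hay rfl]

theorem exists_isStarEdgeColoring_starChromaticIndex {V : Type*} [Finite V]
    (G : SimpleGraph V) :
    ∃ c : Sym2 V → Fin (starChromaticIndex G), IsStarEdgeColoring G c := by
  obtain ⟨k, c, hc⟩ := exists_isStarEdgeColoring G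
  exact Nat.sInf_mem (s := {k | ∃ c : Sym2 V → Fin k, IsStarEdgeColoring G c}) ⟨k, c, hc⟩

namespace twoHTree

variable {t : ℕ} (n : Fin t → ℕ)

abbrev Vertex : Type := Option (Σ i : Fin t, Option (Fin (n i)))

abbrev hub (i : Fin t) : Vertex n := some ⟨i, none⟩

abbrev leaf (i : Fin t) (j : Fin (n i)) : Vertex n := some ⟨i, some j⟩

theorem adj_root_hub (i : Fin t) : (twoHTree t n).Adj none (hub n i) := by
  simp [twoHTree]

theorem adj_hub_leaf (i : Fin t) (j : Fin (n i)) :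
    (twoHTree t n).Adj (hub n i) (leaf n i j) := by
  simp [twoHTree]

theorem hub_ne_leaf (i i' : Fin t) (j : Fin (n i')) : hub n i ≠ leaf n i' j := by
  simp only [ne_eq, Option.some.injEq, Sigma.mk.inj_iff, not_and]
  rintro rfl
  simp

variable {n} {k : ℕ} (c : Sym2 (Vertex n) → Fin k)

def rootColor (i : Fin t) : Fin k := c s(none, hub n i)

def pendantColors (i : Fin t) : Finset (Fin k) :=
  univ.image fun j => c s(hub n i, leaf n i j)

variable {c}

theorem injective_rootColor (hc : IsStarEdgeColoring (twoHTree t n) c) :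
    Function.Injective (rootColor c) := fun i i' h => by
  by_contra hne
  exact hc.1 (adj_root_hub n i) (adj_root_hub n i') (by simp [hne]) h

theorem card_pendantColors (hc : IsStarEdgeColoring (twoHTree t n) c) (i : Fin t) :
    #(pendantColors c i) = n i := by
  rw [pendantColors, card_image_of_injective, card_univ, Fintype.card_fin]
  intro j j' h
  by_contra hne
  exact hc.1 (adj_hub_leaf n i j) (adj_hub_leaf n i j') (by simp [hne]) h

theorem rootColor_notMem_pendantColors (hc : IsStarEdgeColoring (twoHTree t n) c) (i : Fin t) :
    rootColor c i ∉ pendantColors c i := by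
  simp only [pendantColors, mem_image, mem_univ, true_and, not_exists]
  intro j hj
  refine hc.1 (adj_root_hub n i).symm (adj_hub_leaf n i j) (by simp) ?_
  rw [Sym2.eq_swap, hj]
  rfl

/-- The path `leaf i a - hub i - root - hub i' - leaf i' b` would otherwise be bicoloured. -/
theorem rootColor_notMem_of_rootColor_mem (hc : IsStarEdgeColoring (twoHTree t n) c)
    {i i' : Fin t} (h : rootColor c i' ∈ pendantColors c i) :
    rootColor c i ∉ pendantColors c i' := by
  obtain hii' | rfl := ne_or_eq i i'
  · simp only [pendantColors, mem_image, mem_univ, true_and] at h ⊢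
    rintro ⟨b, hb⟩
    obtain ⟨a, ha⟩ := h
    refine hc.2 (leaf n i a) (hub n i) none (hub n i') (leaf n i' b)
      (adj_hub_leaf n i a).symm (adj_root_hub n i).symm (adj_root_hub n i') (adj_hub_leaf n i' b)
      (by simp) (hub_ne_leaf n i' i a).symm (by simp [hii']) (hub_ne_leaf n i i' b) (by simp)
      ⟨?_, ?_⟩
    · rw [Sym2.eq_swap, ha]; rfl
    · rw [Sym2.eq_swap, hb]; rfl
  · exact rootColor_notMem_pendantColors hc i

theorem add_le_add_card_filter (hc : IsStarEdgeColoring (twoHTree t n) c) (i : Fin t) :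
    n i + t ≤ k + #{j | rootColor c j ∈ pendantColors c i} := by
  have hinj := injective_rootColor hc
  have hrootColors : #(univ.image (rootColor c)) = t := by
    rw [card_image_of_injective _ hinj, card_univ, Fintype.card_fin]
  have hinter : #(pendantColors c i ∩ univ.image (rootColor c)) =
      #{j | rootColor c j ∈ pendantColors c i} := by
    rw [inter_comm, ← filter_mem_eq_inter, filter_image, card_image_of_injective _ hinj]
  calc n i + t = #(pendantColors c i) + #(univ.image (rootColor c)) := by
        rw [card_pendantColors hc, hrootColors]
    _ = #(pendantColors c i ∪ univ.image (rootColor c)) +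
        #(pendantColors c i ∩ univ.image (rootColor c)) := (card_union_add_card_inter _ _).symm
    _ ≤ k + #{j | rootColor c j ∈ pendantColors c i} := by
        rw [hinter]
        exact Nat.add_le_add_right ((card_le_univ _).trans_eq (Fintype.card_fin k)) _

theorem sum_add_mul_self_le (hc : IsStarEdgeColoring (twoHTree t n) c) :
    ∑ i, n i + t * t ≤ t * k + t.choose 2 :=
  calc ∑ i, n i + t * t = ∑ i, (n i + t) := by simp [sum_add_distrib]
    _ ≤ ∑ i, (k + #{j | rootColor c j ∈ pendantColors c i}) :=
        sum_le_sum fun i _ => add_le_add_card_filter hc i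
    _ = t * k + ∑ i, #{j | rootColor c j ∈ pendantColors c i} := by simp [sum_add_distrib]
    _ ≤ t * k + t.choose 2 := by
        gcongr
        simpa using sum_card_filter_le_choose_two_of_asymm
          (fun i j => rootColor c j ∈ pendantColors c i)
          fun _ _ => rootColor_notMem_of_rootColor_mem hc

end twoHTree

theorem twoHTree_star_lower_bound_general (t : ℕ) (ht : 1 ≤ t) (n : Fin t → ℕ) :
    ((∑ i, n i : ℕ) : ℚ) / (t : ℚ) + ((t : ℚ) + 1) / 2 ≤
      (starChromaticIndex (twoHTree t n) : ℚ) := by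
  obtain ⟨c, hc⟩ := exists_isStarEdgeColoring_starChromaticIndex (twoHTree t n)
  have hcount : ((∑ i, n i + t * t : ℕ) : ℚ) ≤
      (t * starChromaticIndex (twoHTree t n) + t.choose 2 : ℕ) :=
    mod_cast twoHTree.sum_add_mul_self_le hc
  have htpos : (0 : ℚ) < t := by exact_mod_cast ht
  push_cast [Nat.cast_choose_two] at hcount ⊢
  rw [div_add_div _ _ htpos.ne' two_ne_zero, div_le_iff₀ (by positivity)]
  linarith

/-- Theorem 6.3, lower bound. For the 2H-tree `T_{n₁,…,n_t}` with
`σ_t = n₁ + ⋯ + n_t`, we have `χ'_s(T_{n₁,…,n_t}) ≥ σ_t/t + (t+1)/2` as rationals. -/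
theorem twoHTree_star_lower_bound (t : ℕ) (ht : 1 ≤ t) (n : Fin t → ℕ) (hn : Monotone n) :
    ((∑ i, n i : ℕ) : ℚ) / (t : ℚ) + ((t : ℚ) + 1) / 2 ≤
      (starChromaticIndex (twoHTree t n) : ℚ) :=
  twoHTree_star_lower_bound_general t ht n
end

section
/- Let T_{n₁,…,n_t} be a 2H-tree, let σ_t = n₁ + … + n_t, and let k be a nonnegative integer. If T_{n₁,…,n_t} admits a star edge coloring with t + k colors, then σ_t ≤ t(t−1)/2 + t·k. -/
open Finset

section Counting

variable {ι α : Type*} [Fintype ι]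

theorem Finset.card_le_of_asymm (D : Finset (ι × ι)) (hD : ∀ p ∈ D, p.swap ∉ D) :
    #D ≤ Fintype.card ι * (Fintype.card ι - 1) / 2 := by
  classical
  have hdisj : Disjoint D (D.image Prod.swap) := by
    refine disjoint_left.2 fun p hp hp' => ?_
    obtain ⟨q, hq, rfl⟩ := mem_image.1 hp'
    exact hD q hq (by simpa using hp)
  have hsub : D ∪ D.image Prod.swap ⊆ univ.offDiag := by
    rintro ⟨i, j⟩ hp
    have hirr : ∀ a, (a, a) ∉ D := fun a ha => hD _ ha ha
    have hij : i ≠ j := by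
      rcases mem_union.1 hp with hp | hp
      · rintro rfl
        exact hirr i hp
      · obtain ⟨⟨a, b⟩, hab, he⟩ := mem_image.1 hp
        simp only [Prod.swap_prod_mk, Prod.mk.injEq] at he
        obtain ⟨rfl, rfl⟩ := he
        rintro rfl
        exact hirr _ hab
    simpa using hij
  have hcard := card_le_card hsub
  rw [card_union_of_disjoint hdisj, card_image_of_injective _ Prod.swap_injective,
    offDiag_card, card_univ] at hcard
  rw [Nat.le_div_iff_mul_le two_pos, Nat.mul_sub, mul_one]
  omega

variable [Fintype α] [DecidableEq α]

theorem card_le_card_filter_mem_add_card_compl (A : Finset α) {r : ι → α}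
    (hr : Function.Injective r) :
    #A ≤ #{j | r j ∈ A} + (Fintype.card α - Fintype.card ι) := by
  rw [← card_filter_add_card_filter_not (· ∈ univ.image r)]
  gcongr
  · refine (card_le_card fun a ha => ?_).trans (card_image_le (f := r))
    simp only [mem_filter, mem_image, mem_univ, true_and] at ha ⊢
    obtain ⟨ha, j, rfl⟩ := ha
    exact ⟨j, ha, rfl⟩
  · rw [← card_univ (α := ι), ← card_image_of_injective univ hr, ← card_compl]
    exact card_le_card fun a ha => mem_compl.2 (mem_filter.1 ha).2

theorem sum_card_le_of_asymm_mem (A : ι → Finset α) {r : ι → α}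
    (hr : Function.Injective r) (hA : ∀ i j, r j ∈ A i → r i ∉ A j) :
    ∑ i, #(A i) ≤ Fintype.card ι * (Fintype.card ι - 1) / 2 +
      Fintype.card ι * (Fintype.card α - Fintype.card ι) := by
  set D : Finset (ι × ι) := {p | r p.2 ∈ A p.1}
  have hD : #D = ∑ i, #{j | r j ∈ A i} := by
    simp only [D, card_filter, Fintype.sum_prod_type]
  calc ∑ i, #(A i) ≤ ∑ i, (#{j | r j ∈ A i} + (Fintype.card α - Fintype.card ι)) :=
        sum_le_sum fun i _ => card_le_card_filter_mem_add_card_compl (A i) hr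
    _ = #D + Fintype.card ι * (Fintype.card α - Fintype.card ι) := by
        rw [sum_add_distrib, hD, sum_const, card_univ, smul_eq_mul]
    _ ≤ _ := by
        gcongr
        exact D.card_le_of_asymm fun p hp hp' => hA _ _ (mem_filter.1 hp).2 (mem_filter.1 hp').2

end Counting

theorem IsStarEdgeColoring.injective_comp {V β : Type*} {G : SimpleGraph V} {m : ℕ}
    {c : Sym2 V → Fin m} (hc : IsStarEdgeColoring G c) {u : V} {f : β → V}
    (hf : Function.Injective f) (hadj : ∀ b, G.Adj u (f b)) :
    Function.Injective fun b => c s(u, f b) := by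
  intro b b' hbb'
  by_contra hne
  exact hc.1 (hadj b) (hadj b') (hf.ne hne) hbb'

section TwoHTree

variable {t m : ℕ} {n : Fin t → ℕ}

theorem twoHTree_adj_root (i : Fin t) : (twoHTree t n).Adj none (some ⟨i, none⟩) := by
  simp [twoHTree]

theorem twoHTree_adj_leaf (i : Fin t) (j : Fin (n i)) :
    (twoHTree t n).Adj (some ⟨i, none⟩) (some ⟨i, some j⟩) := by
  simp [twoHTree]

def twoHTreeRootColor (c : Sym2 (Option (Σ i : Fin t, Option (Fin (n i)))) → Fin m)
    (i : Fin t) : Fin m :=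
  c s(none, some ⟨i, none⟩)

def twoHTreeLeafColors (c : Sym2 (Option (Σ i : Fin t, Option (Fin (n i)))) → Fin m)
    (i : Fin t) : Finset (Fin m) :=
  univ.image fun j : Fin (n i) => c s(some ⟨i, none⟩, some ⟨i, some j⟩)

variable {c : Sym2 (Option (Σ i : Fin t, Option (Fin (n i)))) → Fin m}

theorem IsStarEdgeColoring.card_twoHTreeLeafColors (hc : IsStarEdgeColoring (twoHTree t n) c)
    (i : Fin t) : #(twoHTreeLeafColors c i) = n i := by
  rw [twoHTreeLeafColors, card_image_of_injective _ (hc.injective_comp ?_ (twoHTree_adj_leaf i)),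
    card_univ, Fintype.card_fin]
  exact fun _ _ h => by simpa using h

theorem IsStarEdgeColoring.twoHTreeRootColor_injective
    (hc : IsStarEdgeColoring (twoHTree t n) c) : Function.Injective (twoHTreeRootColor c) :=
  hc.injective_comp (fun _ _ h => congrArg Sigma.fst (Option.some.inj h)) twoHTree_adj_root

theorem IsStarEdgeColoring.twoHTreeRootColor_notMem_twoHTreeLeafColors
    (hc : IsStarEdgeColoring (twoHTree t n) c) (i : Fin t) :
    twoHTreeRootColor c i ∉ twoHTreeLeafColors c i := by
  simp only [twoHTreeRootColor, twoHTreeLeafColors, mem_image, mem_univ, true_and, not_exists]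
  intro j hj
  refine hc.1 (twoHTree_adj_leaf i j) (twoHTree_adj_root i).symm (by simp) ?_
  rw [hj, Sym2.eq_swap]

theorem IsStarEdgeColoring.twoHTreeRootColor_mem_twoHTreeLeafColors_asymm
    (hc : IsStarEdgeColoring (twoHTree t n) c) (i j : Fin t)
    (hij : twoHTreeRootColor c j ∈ twoHTreeLeafColors c i) :
    twoHTreeRootColor c i ∉ twoHTreeLeafColors c j := by
  obtain rfl | hne := eq_or_ne i j
  · exact absurd hij (hc.twoHTreeRootColor_notMem_twoHTreeLeafColors i)
  simp only [twoHTreeRootColor, twoHTreeLeafColors, mem_image, mem_univ, true_and] at hij ⊢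
  rintro ⟨b, hb⟩
  obtain ⟨a, ha⟩ := hij
  refine hc.2 _ _ _ _ _ (twoHTree_adj_leaf i a).symm (twoHTree_adj_root i).symm
    (twoHTree_adj_root j) (twoHTree_adj_leaf j b) (by simp) (by rintro ⟨⟩)
    (fun h => hne (congrArg Sigma.fst (Option.some.inj h))) (by rintro ⟨⟩) (by simp) ⟨?_, ?_⟩
  · rw [Sym2.eq_swap, ha]
  · rw [Sym2.eq_swap, hb]

end TwoHTree

theorem twoHTree_star_coloring_counting_general (t k : ℕ) (n : Fin t → ℕ)
    (h : ∃ c : Sym2 (Option (Σ i : Fin t, Option (Fin (n i)))) → Fin (t + k),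
        IsStarEdgeColoring (twoHTree t n) c) :
    ∑ i, n i ≤ t * (t - 1) / 2 + t * k := by
  obtain ⟨c, hc⟩ := h
  have hsum := sum_card_le_of_asymm_mem (twoHTreeLeafColors c)
    hc.twoHTreeRootColor_injective hc.twoHTreeRootColor_mem_twoHTreeLeafColors_asymm
  simpa only [hc.card_twoHTreeLeafColors, Fintype.card_fin, Nat.add_sub_cancel_left] using hsum

/-- counting bound in the proof of Theorem 6.3. If the 2H-tree
`T_{n₁,…,n_t}` admits a star edge coloring with `t + k` colors, then
`σ_t ≤ t(t-1)/2 + t·k` where `σ_t = n₁ + ⋯ + n_t`. -/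
theorem twoHTree_star_coloring_counting (t k : ℕ) (ht : 1 ≤ t) (n : Fin t → ℕ)
    (hn : Monotone n)
    (h : ∃ c : Sym2 (Option (Σ i : Fin t, Option (Fin (n i)))) → Fin (t + k),
        IsStarEdgeColoring (twoHTree t n) c) :
    ∑ i, n i ≤ t * (t - 1) / 2 + t * k :=
  twoHTree_star_coloring_counting_general t k n h
end

section
/- Let T_{(r,t)} be the r-regular 2H-tree with r ≥ 1 and t ≥ 1. If t ≤ 2r − 1, then χ'_s(T_{(r,t)}) = r + ⌊t/2⌋. -/
namespace TwoHAux

abbrev V (r t : ℕ) := Option (Σ i : Fin t, Option (Fin (r - 1)))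

abbrev G (r t : ℕ) : SimpleGraph (V r t) := twoHTree t (fun _ => r - 1)

variable {r t : ℕ}

lemma adj_root_mid (i : Fin t) : (G r t).Adj none (some ⟨i, none⟩) :=
  ⟨by simp, Or.inl (Or.inl ⟨rfl, i, rfl⟩)⟩

lemma adj_mid_leaf (i : Fin t) (j : Fin (r - 1)) :
    (G r t).Adj (some ⟨i, none⟩) (some ⟨i, some j⟩) :=
  ⟨by simp, Or.inl (Or.inr ⟨i, j, rfl, rfl⟩)⟩

lemma adj_none_iff (x : V r t) : (G r t).Adj x none ↔ ∃ i, x = some ⟨i, none⟩ := by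
  constructor
  · rintro ⟨hne, (⟨rfl, i, hi⟩ | ⟨i, j, rfl, hy⟩) | (⟨h1, i, hi⟩ | ⟨i, j, h1, h2⟩)⟩
    · exact absurd hi (by simp)
    · exact absurd hy (by simp)
    · exact ⟨i, hi⟩
    · exact absurd h1 (by simp)
  · rintro ⟨i, rfl⟩
    exact ((G r t).adj_symm (adj_root_mid i))

lemma adj_mid_iff (x : V r t) (i : Fin t) :
    (G r t).Adj x (some ⟨i, none⟩) ↔ x = none ∨ ∃ j, x = some ⟨i, some j⟩ := by
  constructor
  · rintro ⟨hne, (⟨rfl, i', hi⟩ | ⟨i', j, rfl, hy⟩) | (⟨h1, i', hi⟩ | ⟨i', j, h1, rfl⟩)⟩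
    · exact Or.inl rfl
    · exact absurd hy (by simp)
    · exact absurd h1 (by simp)
    · obtain ⟨rfl, h2⟩ := Sigma.mk.inj_iff.mp (Option.some_injective _ h1)
      exact Or.inr ⟨j, rfl⟩
  · rintro (rfl | ⟨j, rfl⟩)
    · exact adj_root_mid i
    · exact ((G r t).adj_symm (adj_mid_leaf i j))

lemma adj_leaf_iff (x : V r t) (i : Fin t) (j : Fin (r - 1)) :
    (G r t).Adj x (some ⟨i, some j⟩) ↔ x = some ⟨i, none⟩ := by
  constructor
  · rintro ⟨hne, (⟨rfl, i', hi⟩ | ⟨i', j', rfl, hy⟩) | (⟨h1, i', hi⟩ | ⟨i', j', h1, h2⟩)⟩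
    · exact absurd hi (by simp)
    · obtain ⟨rfl, h2⟩ := Sigma.mk.inj_iff.mp (Option.some_injective _ hy)
      rfl
    · exact absurd h1 (by simp)
    · exact absurd h1 (by simp)
  · rintro rfl
    exact adj_mid_leaf i j

end TwoHAux

namespace TwoHAux

variable {r t : ℕ}

lemma mod_small {a b : ℕ} (hb : 0 < b) (h : a < 2 * b) :
    a % b = a ∨ (b ≤ a ∧ a % b = a - b) := by
  rcases Nat.lt_or_ge a b with h1 | h1
  · exact Or.inl (Nat.mod_eq_of_lt h1)
  · refine Or.inr ⟨h1, ?_⟩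
    rw [Nat.mod_eq_sub_mod h1, Nat.mod_eq_of_lt (by omega)]

/-- the value of the leaf color (as a natural number) -/
def lcv (r t : ℕ) (i : Fin t) (j : Fin (r - 1)) : ℕ :=
  if (j : ℕ) < (t - 1) / 2 then ((i : ℕ) + 1 + (j : ℕ)) % t else t + (j : ℕ) - (t - 1) / 2

lemma lcv_lt (hr : 1 ≤ r) (ht : 1 ≤ t) (h : t ≤ 2 * r - 1) (i : Fin t) (j : Fin (r - 1)) :
    lcv r t i j < r + t / 2 := by
  have hj := j.isLt
  unfold lcv
  split
  · have := Nat.mod_lt ((i : ℕ) + 1 + (j : ℕ)) (show 0 < t by omega)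
    omega
  · omega

lemma lcv_ne_self (ht : 1 ≤ t) (i : Fin t) (j : Fin (r - 1)) : lcv r t i j ≠ (i : ℕ) := by
  have hi := i.isLt
  unfold lcv
  split
  · rename_i hjk
    rcases mod_small (show 0 < t by omega) (show (i:ℕ) + 1 + j < 2 * t by omega) with h1 | ⟨h1, h2⟩ <;> omega
  · rename_i hjk
    omega

lemma lcv_inj (ht : 1 ≤ t) (i : Fin t) (j j' : Fin (r - 1))
    (hjj : lcv r t i j = lcv r t i j') : j = j' := by
  have hi := i.isLt
  have hj := j.isLt
  have hj' := j'.isLt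
  have h0t : 0 < t := by omega
  unfold lcv at hjj
  apply Fin.ext
  split at hjj <;> split at hjj
  · rename_i hk1 hk2
    rcases mod_small h0t (show (i:ℕ) + 1 + (j:ℕ) < 2 * t by omega) with h1 | ⟨h1, h1'⟩ <;>
      rcases mod_small h0t (show (i:ℕ) + 1 + (j':ℕ) < 2 * t by omega) with h2 | ⟨h2, h2'⟩ <;>
      omega
  · rename_i hk1 hk2
    have m1 := Nat.mod_lt ((i:ℕ) + 1 + (j:ℕ)) h0t
    omega
  · rename_i hk1 hk2
    have m2 := Nat.mod_lt ((i:ℕ) + 1 + (j':ℕ)) h0t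
    omega
  · omega

lemma lcv_star (ht : 1 ≤ t) (i i' : Fin t) (j j' : Fin (r - 1)) (hne : i ≠ i')
    (h1 : lcv r t i j = (i' : ℕ)) (h2 : lcv r t i' j' = (i : ℕ)) : False := by
  have hi := i.isLt
  have hi' := i'.isLt
  have hj := j.isLt
  have hj' := j'.isLt
  have h0t : 0 < t := by omega
  have hne' : (i : ℕ) ≠ (i' : ℕ) := fun hc => hne (Fin.ext hc)
  unfold lcv at h1 h2
  split at h1 <;> split at h2
  · rename_i hk1 hk2
    rcases mod_small h0t (show (i:ℕ) + 1 + (j:ℕ) < 2 * t by omega) with e1 | ⟨e1, e1'⟩ <;>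
      rcases mod_small h0t (show (i':ℕ) + 1 + (j':ℕ) < 2 * t by omega) with e2 | ⟨e2, e2'⟩ <;>
      omega
  · rename_i hk1 hk2
    omega
  · rename_i hk1 hk2
    omega
  · omega

end TwoHAux

namespace TwoHAux

variable {r t : ℕ}

/-- nat-valued color of a (potential) edge -/
def pcv (r t : ℕ) : V r t → V r t → ℕ
  | none, some ⟨i, none⟩ => (i : ℕ)
  | some ⟨i, none⟩, none => (i : ℕ)
  | some ⟨i, none⟩, some ⟨_, some j⟩ => lcv r t i j
  | some ⟨_, some j⟩, some ⟨i, none⟩ => lcv r t i j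
  | _, _ => 0

lemma pcv_symm (x y : V r t) : pcv r t x y = pcv r t y x := by
  rcases x with _ | ⟨i, _ | j⟩ <;> rcases y with _ | ⟨i', _ | j'⟩ <;> rfl

def col (r t : ℕ) (hN : 0 < r + t / 2) : Sym2 (V r t) → Fin (r + t / 2) :=
  Sym2.lift ⟨fun x y => ⟨pcv r t x y % (r + t / 2), Nat.mod_lt _ hN⟩,
    fun x y => by simp [pcv_symm x y]⟩

lemma col_mk (hN : 0 < r + t / 2) (x y : V r t) :
    col r t hN s(x, y) = ⟨pcv r t x y % (r + t / 2), Nat.mod_lt _ hN⟩ := rfl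

end TwoHAux

namespace TwoHAux

variable {r t : ℕ}

lemma col_isStar (hr : 1 ≤ r) (ht : 1 ≤ t) (h : t ≤ 2 * r - 1) (hN : 0 < r + t / 2) :
    IsStarEdgeColoring (G r t) (col r t hN) := by
  have htN : t ≤ r + t / 2 := by omega
  constructor
  · intro u v w huv huw hvw
    rcases u with _ | ⟨i, _ | j⟩
    · obtain ⟨iv, rfl⟩ := (adj_none_iff _).mp huv.symm
      obtain ⟨iw, rfl⟩ := (adj_none_iff _).mp huw.symm
      simp only [col_mk, pcv, Fin.mk.injEq, ne_eq]
      rw [Nat.mod_eq_of_lt (by have := iv.isLt; omega),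
          Nat.mod_eq_of_lt (by have := iw.isLt; omega)]
      intro hc
      exact hvw (by rw [Fin.ext hc])
    · rcases (adj_mid_iff v i).mp huv.symm with rfl | ⟨jv, rfl⟩ <;>
        rcases (adj_mid_iff w i).mp huw.symm with rfl | ⟨jw, rfl⟩
      · exact absurd rfl hvw
      · simp only [col_mk, pcv, Fin.mk.injEq, ne_eq]
        rw [Nat.mod_eq_of_lt (by have := i.isLt; omega),
            Nat.mod_eq_of_lt (lcv_lt hr ht h i jw)]
        exact fun hc => lcv_ne_self ht i jw hc.symm
      · simp only [col_mk, pcv, Fin.mk.injEq, ne_eq]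
        rw [Nat.mod_eq_of_lt (lcv_lt hr ht h i jv),
            Nat.mod_eq_of_lt (by have := i.isLt; omega)]
        exact fun hc => lcv_ne_self ht i jv hc
      · simp only [col_mk, pcv, Fin.mk.injEq, ne_eq]
        rw [Nat.mod_eq_of_lt (lcv_lt hr ht h i jv),
            Nat.mod_eq_of_lt (lcv_lt hr ht h i jw)]
        intro hc
        exact hvw (by rw [lcv_inj ht i jv jw hc])
    · obtain rfl := (adj_leaf_iff v i j).mp huv.symm
      obtain rfl := (adj_leaf_iff w i j).mp huw.symm
      exact absurd rfl hvw
  · intro a b x y z hab hbx hxy hyz hax hay hby hbz hxz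
    rcases b with _ | ⟨ib, _ | jb⟩
    · obtain ⟨ix, rfl⟩ := (adj_none_iff x).mp hbx.symm
      rcases (adj_mid_iff y ix).mp hxy.symm with rfl | ⟨jy, rfl⟩
      · exact absurd rfl hby
      · obtain rfl := (adj_leaf_iff z ix jy).mp hyz.symm
        exact absurd rfl hxz
    · rcases (adj_mid_iff x ib).mp hbx.symm with rfl | ⟨jx, rfl⟩
      · obtain ⟨iy, rfl⟩ := (adj_none_iff y).mp hxy.symm
        rcases (adj_mid_iff a ib).mp hab with rfl | ⟨ja, rfl⟩
        · exact absurd rfl hax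
        · rcases (adj_mid_iff z iy).mp hyz.symm with rfl | ⟨jz, rfl⟩
          · exact absurd rfl (Ne.symm hxz)
          · have hii : ib ≠ iy := by
              intro hc
              exact hby (by rw [hc])
            rintro ⟨h1, h2⟩
            simp only [col_mk, pcv, Fin.mk.injEq] at h1 h2
            rw [Nat.mod_eq_of_lt (lcv_lt hr ht h ib ja),
                Nat.mod_eq_of_lt (by have := iy.isLt; omega)] at h1
            rw [Nat.mod_eq_of_lt (by have := ib.isLt; omega),
                Nat.mod_eq_of_lt (lcv_lt hr ht h iy jz)] at h2
            exact lcv_star ht ib iy ja jz hii h1 h2.symm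
      · obtain rfl := (adj_leaf_iff y ib jx).mp hxy.symm
        exact absurd rfl hby
    · obtain rfl := (adj_leaf_iff a ib jb).mp hab
      obtain rfl := (adj_leaf_iff x ib jb).mp hbx.symm
      exact absurd rfl hax

end TwoHAux

namespace TwoHAux

variable {r t : ℕ}

lemma mid_ne_mid {i i' : Fin t} (hne : i ≠ i') :
    (some ⟨i, none⟩ : V r t) ≠ some ⟨i', none⟩ := by
  simp [hne]

lemma leaf_ne_leaf {i : Fin t} {j j' : Fin (r - 1)} (hne : j ≠ j') :
    (some ⟨i, some j⟩ : V r t) ≠ some ⟨i, some j'⟩ := by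
  simp [hne]

lemma lower_bound (hr : 1 ≤ r) (ht : 1 ≤ t) {N : ℕ} (c : Sym2 (V r t) → Fin N)
    (hc : IsStarEdgeColoring (G r t) c) : r + t / 2 ≤ N := by
  classical
  obtain ⟨hc1, hc2⟩ := hc
  set sc : Fin t → Fin N := fun i => c s(none, some ⟨i, none⟩) with hsc
  set lc : Fin t → Fin (r - 1) → Fin N :=
    fun i j => c s(some ⟨i, none⟩, some ⟨i, some j⟩) with hlc
  have scInj : Function.Injective sc := by
    intro i i' he
    by_contra hne
    exact hc1 (adj_root_mid i) (adj_root_mid i') (mid_ne_mid hne) he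
  have lcInj : ∀ i : Fin t, Function.Injective (lc i) := by
    intro i j j' he
    by_contra hne
    exact hc1 (adj_mid_leaf i j) (adj_mid_leaf i j') (leaf_ne_leaf hne) he
  have lc_ne_sc : ∀ (i : Fin t) (j : Fin (r - 1)), lc i j ≠ sc i := by
    intro i j he
    have hswap : (s(some ⟨i, none⟩, (none : V r t))) = s((none : V r t), some ⟨i, none⟩) :=
      Sym2.eq_swap
    exact hc1 (adj_mid_leaf i j) ((adj_root_mid i).symm) (by simp)
      (by rw [hswap]; exact he)
  have star : ∀ (i i' : Fin t) (j j' : Fin (r - 1)), i ≠ i' →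
      lc i j = sc i' → lc i' j' ≠ sc i := by
    intro i i' j j' hne h1 h2
    refine hc2 (some ⟨i, some j⟩) (some ⟨i, none⟩) none (some ⟨i', none⟩)
      (some ⟨i', some j'⟩) (adj_mid_leaf i j).symm (adj_root_mid i).symm
      (adj_root_mid i') (adj_mid_leaf i' j') (by simp) (by simp)
      (mid_ne_mid hne) (by simp) (by simp) ?_
    have hswap1 : (s(some ⟨i, some j⟩, (some ⟨i, none⟩ : V r t)))
        = s((some ⟨i, none⟩ : V r t), some ⟨i, some j⟩) := Sym2.eq_swap
    have hswap2 : (s(some ⟨i, none⟩, (none : V r t))) = s((none : V r t), some ⟨i, none⟩) :=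
      Sym2.eq_swap
    constructor
    · rw [hswap1]
      exact h1
    · rw [hswap2]
      exact h2.symm
  -- counting
  set SC : Finset (Fin N) := Finset.image sc Finset.univ with hSC
  have cardSC : SC.card = t := by
    rw [hSC, Finset.card_image_of_injective _ scInj, Finset.card_univ, Fintype.card_fin]
  have htN : t ≤ N := by
    have := Finset.card_le_univ SC
    rwa [cardSC, Fintype.card_fin] at this
  set lcS : Fin t → Finset (Fin N) := fun i => Finset.image (lc i) Finset.univ with hlcS
  have cardlcS : ∀ i, (lcS i).card = r - 1 := by
    intro i
    rw [hlcS, Finset.card_image_of_injective _ (lcInj i), Finset.card_univ, Fintype.card_fin]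
  set m : ℕ := r - 1 - (N - t) with hm
  have hfilter : ∀ i : Fin t,
      m ≤ (Finset.univ.filter (fun j => sc j ∈ lcS i)).card := by
    intro i
    have e1 : (lcS i ∩ SC).card + (lcS i \ SC).card = (lcS i).card :=
      Finset.card_inter_add_card_sdiff _ _
    have e2 : (lcS i \ SC).card ≤ N - t := by
      have hsub : lcS i \ SC ⊆ Finset.univ \ SC := by
        exact Finset.sdiff_subset_sdiff (Finset.subset_univ _) le_rfl
      have := Finset.card_le_card hsub
      rwa [Finset.card_sdiff_of_subset (Finset.subset_univ _), Finset.card_univ,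
        Fintype.card_fin, cardSC] at this
    have e3 : lcS i ∩ SC = Finset.image sc (Finset.univ.filter (fun j => sc j ∈ lcS i)) := by
      ext a
      simp only [Finset.mem_inter, Finset.mem_image, Finset.mem_filter, Finset.mem_univ,
        true_and, hSC]
      constructor
      · rintro ⟨ha, jj, rfl⟩
        exact ⟨jj, ha, rfl⟩
      · rintro ⟨jj, hmem, rfl⟩
        exact ⟨hmem, jj, rfl⟩
    have e4 : (lcS i ∩ SC).card = (Finset.univ.filter (fun j => sc j ∈ lcS i)).card := by
      rw [e3, Finset.card_image_of_injective _ scInj]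
    have := cardlcS i
    omega
  -- double counting
  have hsum : ∑ j : Fin t, (Finset.univ.filter (fun i => sc j ∈ lcS i)).card
      = ∑ i : Fin t, (Finset.univ.filter (fun j => sc j ∈ lcS i)).card := by
    simp only [Finset.card_filter]
    exact Finset.sum_comm
  have hex : ∃ j : Fin t, m ≤ (Finset.univ.filter (fun i => sc j ∈ lcS i)).card := by
    by_contra hall
    push_neg at hall
    have hlt : ∑ j : Fin t, (Finset.univ.filter (fun i => sc j ∈ lcS i)).card
        < ∑ i : Fin t, (Finset.univ.filter (fun j => sc j ∈ lcS i)).card := by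
      calc ∑ j : Fin t, (Finset.univ.filter (fun i => sc j ∈ lcS i)).card
          < ∑ _j : Fin t, m := by
            apply Finset.sum_lt_sum_of_nonempty
            · exact ⟨⟨0, ht⟩, Finset.mem_univ _⟩
            · intro j _
              exact hall j
        _ ≤ ∑ i : Fin t, (Finset.univ.filter (fun j => sc j ∈ lcS i)).card :=
            Finset.sum_le_sum (fun i _ => hfilter i)
    omega
  obtain ⟨j, hj⟩ := hex
  set F : Finset (Fin t) := Finset.univ.filter (fun i => sc j ∈ lcS i) with hF
  have hjF : j ∉ F := by
    rw [hF]
    simp only [Finset.mem_filter, Finset.mem_univ, true_and]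
    intro hmem
    rw [hlcS] at hmem
    simp only [Finset.mem_image, Finset.mem_univ, true_and] at hmem
    obtain ⟨l, hl⟩ := hmem
    exact lc_ne_sc j l hl
  have hdisj : Disjoint (lcS j) (Finset.image sc (insert j F)) := by
    rw [Finset.disjoint_left]
    intro a ha hmem
    simp only [Finset.mem_image, Finset.mem_insert] at hmem
    obtain ⟨i, hi, rfl⟩ := hmem
    rw [hlcS] at ha
    simp only [Finset.mem_image, Finset.mem_univ, true_and] at ha
    obtain ⟨l, hl⟩ := ha
    rcases hi with rfl | hiF
    · exact lc_ne_sc i l hl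
    · have hisc : sc j ∈ lcS i := by
        rw [hF] at hiF
        exact (Finset.mem_filter.mp hiF).2
      rw [hlcS] at hisc
      simp only [Finset.mem_image, Finset.mem_univ, true_and] at hisc
      obtain ⟨l0, hl0⟩ := hisc
      have hne : i ≠ j := by
        rintro rfl
        exact hjF hiF
      exact star i j l0 l hne hl0 hl
  have hcard : (lcS j).card + (Finset.image sc (insert j F)).card ≤ N := by
    rw [← Finset.card_union_of_disjoint hdisj]
    have := Finset.card_le_univ (lcS j ∪ Finset.image sc (insert j F))
    rwa [Fintype.card_fin] at this
  rw [cardlcS, Finset.card_image_of_injective _ scInj,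
    Finset.card_insert_of_notMem hjF] at hcard
  omega

end TwoHAux


/-- Corollary 6.4, first case. For the `r`-regular 2H-tree `T_{(r,t)}`,
if `t ≤ 2r - 1` then `χ'_s(T_{(r,t)}) = r + ⌊t/2⌋`. -/
theorem regular_twoHTree_star_eq_of_small_t (r t : ℕ) (hr : 1 ≤ r) (ht : 1 ≤ t)
    (h : t ≤ 2 * r - 1) :
    starChromaticIndex (twoHTree t (fun _ => r - 1)) = r + t / 2 := by
  have hN : 0 < r + t / 2 := by omega
  apply le_antisymm
  · exact Nat.sInf_le ⟨TwoHAux.col r t hN, TwoHAux.col_isStar hr ht h hN⟩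
  · refine le_csInf ⟨r + t / 2, TwoHAux.col r t hN, TwoHAux.col_isStar hr ht h hN⟩ ?_
    rintro N ⟨c, hc⟩
    exact TwoHAux.lower_bound hr ht c hc
end
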